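/- arXiv:2208.00732 — 4 statements merged into one kernel-verified Lean document; each statement's English description precedes it below -/
import Mathlib

section
/- If f : ℝⁿ × ℝᵖ → ℝ is M_f-Lipschitz, g satisfies the strong-convexity and Lipschitz-Hessian assumptions, Φ(x) := f(x, y*(x)) is bounded below on ℝⁿ, and β ≥ M_f Q_g / μ³, then the function h(x,y) = f(x, A(x,y)) + (β/2)‖∇_y g(x,y)‖² satisfies h(x,y) ≥ f(x, y*(x)) for all (x,y); in particular h is bounded below on ℝⁿ × ℝᵖ. -/
/-!
Fix `x` and write `G = ∇_y g(x, ·)`, `H = ∇²_{yy} g(x, ·)` and `y₀ = y*(x)`, so that `G y₀ = 0`.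
Strong convexity makes each `H y` invertible with `‖(H y)⁻¹‖ ≤ 1/μ` and gives
`μ ‖y - y₀‖ ≤ ‖G y‖`; the Lipschitz Hessian gives the Taylor bound
`‖H y (y - y₀) - G y‖ ≤ Q/2 ‖y - y₀‖²`. As `A(x,y) - y₀ = (H y)⁻¹ (H y (y - y₀) - G y)`, the Newton
step lands within `Q/(2μ³) ‖G y‖²` of `y₀`, and the Lipschitz bound on `f` turns this distance into
the penalty `(β/2) ‖G y‖²`.
-/

open RealInnerProductSpace Set

theorem nonneg_of_norm_sub_le_mul {X Y : Type*} [SeminormedAddCommGroup X] [NormedAddCommGroup Y]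
    {F : Y → X} {K : ℝ} (h : ∀ a b, ‖F a - F b‖ ≤ K * ‖a - b‖) {a b : Y} (hab : a ≠ b) : 0 ≤ K :=
  nonneg_of_mul_nonneg_left ((norm_nonneg _).trans (h a b)) (norm_pos_iff.2 (sub_ne_zero.2 hab))

section Taylor
variable {E F : Type*} [NormedAddCommGroup E] [NormedSpace ℝ E] [NormedAddCommGroup F]
  [NormedSpace ℝ F]

theorem norm_sub_sub_fderiv_le_of_lipschitz {G : E → F} {H : E → E →L[ℝ] F} {Q : ℝ}
    (hG : ∀ z, HasFDerivAt G (H z) z) (hH : ∀ a b, ‖H a - H b‖ ≤ Q * ‖a - b‖) (y z : E) :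
    ‖G z - G y - H y (z - y)‖ ≤ Q / 2 * ‖z - y‖ ^ 2 := by
  set v := z - y
  have hψ : ∀ t : ℝ, HasDerivAt (fun t : ℝ => G (y + t • v) - G y - t • H y v)
      (H (y + t • v) v - H y v) t := by
    intro t
    have hline : HasDerivAt (fun t : ℝ => y + t • v) v t := by
      simpa using ((hasDerivAt_id t).smul_const v).const_add y
    simpa using (((hG _).comp_hasDerivAt t hline).sub_const (G y)).fun_sub
      ((hasDerivAt_id' t).smul_const (H y v))
  have hB : ∀ t : ℝ, HasDerivAt (fun t : ℝ => Q / 2 * ‖v‖ ^ 2 * t ^ 2) (Q * ‖v‖ ^ 2 * t) t := by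
    intro t
    exact ((hasDerivAt_pow 2 t).const_mul (Q / 2 * ‖v‖ ^ 2)).congr_deriv (by simp; ring)
  have hbound : ∀ t ∈ Ico (0 : ℝ) 1, ‖H (y + t • v) v - H y v‖ ≤ Q * ‖v‖ ^ 2 * t := by
    rintro t ⟨ht0, -⟩
    calc ‖H (y + t • v) v - H y v‖ = ‖(H (y + t • v) - H y) v‖ := rfl
      _ ≤ ‖H (y + t • v) - H y‖ * ‖v‖ := (H (y + t • v) - H y).le_opNorm v
      _ ≤ Q * ‖y + t • v - y‖ * ‖v‖ := by gcongr; exact hH _ _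
      _ = Q * ‖v‖ ^ 2 * t := by
        rw [add_sub_cancel_left, norm_smul, Real.norm_of_nonneg ht0]; ring
  have := image_norm_le_of_norm_deriv_right_le_deriv_boundary
    (fun t _ => (hψ t).continuousAt.continuousWithinAt) (fun t _ => (hψ t).hasDerivWithinAt)
    (by simp) hB hbound (right_mem_Icc.2 zero_le_one)
  simpa [v] using this

end Taylor

section InnerProduct
variable {E : Type*} [NormedAddCommGroup E] [InnerProductSpace ℝ E]

theorem mul_norm_sub_sq_le_inner_sub_of_coercive_fderiv {G : E → E} {H : E → E →L[ℝ] E} {μ : ℝ}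
    (hG : ∀ z, HasFDerivAt G (H z) z) (hH : ∀ z v, μ * ‖v‖ ^ 2 ≤ ⟪v, H z v⟫) (y z : E) :
    μ * ‖z - y‖ ^ 2 ≤ ⟪z - y, G z - G y⟫ := by
  set v := z - y
  have hφ : ∀ t : ℝ, HasDerivAt (fun t : ℝ => ⟪v, G (y + t • v)⟫) ⟪v, H (y + t • v) v⟫ t := by
    intro t
    have hline : HasDerivAt (fun t : ℝ => y + t • v) v t := by
      simpa using ((hasDerivAt_id t).smul_const v).const_add y
    simpa using (hasDerivAt_const t v).inner ℝ ((hG _).comp_hasDerivAt t hline)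
  have := mul_sub_le_image_sub_of_le_deriv (fun t => (hφ t).differentiableAt)
    (fun t => (hφ t).deriv ▸ hH _ v) zero_le_one
  simpa [v, inner_sub_right] using this

theorem mul_norm_le_norm_of_mul_sq_le_inner {μ : ℝ} {u w : E} (h : μ * ‖u‖ ^ 2 ≤ ⟪u, w⟫) :
    μ * ‖u‖ ≤ ‖w‖ := by
  rcases (norm_nonneg u).eq_or_lt with hu | hu
  · simp [← hu]
  refine le_of_mul_le_mul_right ?_ hu
  calc μ * ‖u‖ * ‖u‖ = μ * ‖u‖ ^ 2 := by ring
    _ ≤ ⟪u, w⟫ := h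
    _ ≤ ‖w‖ * ‖u‖ := (real_inner_le_norm u w).trans_eq (mul_comm _ _)

theorem mul_norm_sub_le_of_coercive_fderiv {G : E → E} {H : E → E →L[ℝ] E} {μ : ℝ}
    (hG : ∀ z, HasFDerivAt G (H z) z) (hH : ∀ z v, μ * ‖v‖ ^ 2 ≤ ⟪v, H z v⟫) (y z : E) :
    μ * ‖z - y‖ ≤ ‖G z - G y‖ :=
  mul_norm_le_norm_of_mul_sq_le_inner (mul_norm_sub_sq_le_inner_sub_of_coercive_fderiv hG hH y z)

variable [CompleteSpace E]

theorem IsLocalMin.hasGradientAt_eq_zero {f : E → ℝ} {f' a : E}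
    (h : IsLocalMin f a) (hf : HasGradientAt f f' a) : f' = 0 := by
  simpa using h.hasFDerivAt_eq_zero hf.hasFDerivAt

namespace ContinuousLinearMap

theorem isInvertible_of_coercive {μ : ℝ} (hμ : 0 < μ) (T : E →L[ℝ] E)
    (hT : ∀ v, μ * ‖v‖ ^ 2 ≤ ⟪v, T v⟫) : T.IsInvertible := by
  let B : E →L⋆[ℝ] E →L[ℝ] ℝ := (innerSL ℝ).comp T
  have hB : IsCoercive B := ⟨μ, hμ, fun v => by
    simpa [B, sq, mul_assoc, real_inner_comm] using hT v⟩
  refine ⟨hB.continuousLinearEquivOfBilin, ?_⟩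
  ext v
  exact (hB.unique_continuousLinearEquivOfBilin fun w => rfl).symm

theorem norm_inverse_apply_le_of_coercive {μ : ℝ} (hμ : 0 < μ) (T : E →L[ℝ] E)
    (hT : ∀ v, μ * ‖v‖ ^ 2 ≤ ⟪v, T v⟫) (w : E) : ‖T.inverse w‖ ≤ μ⁻¹ * ‖w‖ := by
  rw [le_inv_mul_iff₀ hμ]
  simpa [(T.isInvertible_of_coercive hμ hT).self_apply_inverse] using
    mul_norm_le_norm_of_mul_sq_le_inner (hT (T.inverse w))

end ContinuousLinearMap

theorem norm_newton_step_sub_root_le {G : E → E} {H : E → E →L[ℝ] E} {μ Q : ℝ} (hμ : 0 < μ)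
    (hG : ∀ z, HasFDerivAt G (H z) z) (hcoer : ∀ z v, μ * ‖v‖ ^ 2 ≤ ⟪v, H z v⟫)
    (hH : ∀ a b, ‖H a - H b‖ ≤ Q * ‖a - b‖) {y₀ : E} (hy₀ : G y₀ = 0) (y : E) :
    ‖y - Ring.inverse (H y) (G y) - y₀‖ ≤ Q / (2 * μ ^ 3) * ‖G y‖ ^ 2 := by
  obtain rfl | hne := eq_or_ne y y₀
  · simp [hy₀]
  have hQ : 0 ≤ Q := nonneg_of_norm_sub_le_mul hH hne
  have hdist : ‖y - y₀‖ ≤ μ⁻¹ * ‖G y‖ := by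
    rw [le_inv_mul_iff₀ hμ]
    simpa [hy₀] using mul_norm_sub_le_of_coercive_fderiv hG hcoer y₀ y
  have htaylor : ‖H y (y - y₀) - G y‖ ≤ Q / 2 * ‖y - y₀‖ ^ 2 := by
    have := norm_sub_sub_fderiv_le_of_lipschitz hG hH y y₀
    rw [hy₀, ← neg_sub y y₀, map_neg, norm_neg] at this
    convert this using 2
    abel
  rw [ContinuousLinearMap.ringInverse_eq_inverse]
  calc ‖y - (H y).inverse (G y) - y₀‖ = ‖(H y).inverse (H y (y - y₀) - G y)‖ := by
        rw [map_sub, ((H y).isInvertible_of_coercive hμ (hcoer y)).inverse_apply_self]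
        congr 1; abel
    _ ≤ μ⁻¹ * (Q / 2 * ‖y - y₀‖ ^ 2) :=
        ((H y).norm_inverse_apply_le_of_coercive hμ (hcoer y) _).trans (by gcongr)
    _ ≤ μ⁻¹ * (Q / 2 * (μ⁻¹ * ‖G y‖) ^ 2) := by gcongr
    _ = Q / (2 * μ ^ 3) * ‖G y‖ ^ 2 := by field_simp

end InnerProduct

/-- If `f` is `Mf`-Lipschitz, `g` satisfies the strong-convexity and
Lipschitz-Hessian assumptions, `Φ(x) := f(x, y*(x))` is bounded below, and
`β ≥ Mf Qg / μ³`, then `h(x,y) = f(x, A(x,y)) + (β/2)‖∇_y g(x,y)‖²` satisfies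
`h(x,y) ≥ f(x, y*(x))` for all `(x,y)`; in particular `h` is bounded below. -/
theorem cdb_objective_bounded_below (n p : ℕ) (μ Qg Mf β : ℝ) (hμ : 0 < μ)
    (f g : EuclideanSpace ℝ (Fin n) × EuclideanSpace ℝ (Fin p) → ℝ)
    (gradY : EuclideanSpace ℝ (Fin n) × EuclideanSpace ℝ (Fin p) → EuclideanSpace ℝ (Fin p))
    (hessYY : EuclideanSpace ℝ (Fin n) × EuclideanSpace ℝ (Fin p) →
      EuclideanSpace ℝ (Fin p) →L[ℝ] EuclideanSpace ℝ (Fin p))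
    (ystar : EuclideanSpace ℝ (Fin n) → EuclideanSpace ℝ (Fin p))
    -- `f` is `Mf`-Lipschitz continuous
    (hf : ∀ q q', |f q - f q'| ≤ Mf * ‖q - q'‖)
    (hgY : ∀ x y, HasGradientAt (fun y' => g (x, y')) (gradY (x, y)) y)
    (hhess : ∀ x y, HasFDerivAt (fun y' => gradY (x, y')) (hessYY (x, y)) y)
    -- strong convexity in `y`: `∇²_{yy} g(x,y) ⪰ μ I`
    (hsc : ∀ q v, μ * ‖v‖ ^ 2 ≤ (inner ℝ v (hessYY q v) : ℝ))
    -- the Hessian map is `Qg`-Lipschitz in operator norm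
    (hQ : ∀ q q', ‖hessYY q - hessYY q'‖ ≤ Qg * ‖q - q'‖)
    -- `y*(x)` minimizes `g(x, ·)`
    (hystar : ∀ x, IsMinOn (fun y' => g (x, y')) Set.univ (ystar x))
    -- `Φ(x) = f(x, y*(x))` is bounded below
    (hΦ : BddBelow (Set.range fun x => f (x, ystar x)))
    (hβ : Mf * Qg / μ ^ 3 ≤ β) :
    (∀ x y, f (x, ystar x) ≤
        f (x, y - Ring.inverse (hessYY (x, y)) (gradY (x, y))) + β / 2 * ‖gradY (x, y)‖ ^ 2) ∧
      BddBelow (Set.range fun q : EuclideanSpace ℝ (Fin n) × EuclideanSpace ℝ (Fin p) =>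
        f (q.1, q.2 - Ring.inverse (hessYY q) (gradY q)) + β / 2 * ‖gradY q‖ ^ 2) := by
  have key : ∀ x y, f (x, ystar x) ≤
      f (x, y - Ring.inverse (hessYY (x, y)) (gradY (x, y))) + β / 2 * ‖gradY (x, y)‖ ^ 2 := by
    intro x y
    rcases subsingleton_or_nontrivial (EuclideanSpace ℝ (Fin p)) with hp | hp
    · rw [Subsingleton.elim (y - _) (ystar x), Subsingleton.elim (gradY (x, y)) 0]
      simp
    have hslice : ∀ a b : EuclideanSpace ℝ (Fin p), ‖(x, a) - (x, b)‖ = ‖a - b‖ := by simp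
    obtain ⟨y₁, y₂, hne⟩ := exists_pair_ne (EuclideanSpace ℝ (Fin p))
    have hMf : 0 ≤ Mf := nonneg_of_norm_sub_le_mul (F := f) hf (a := (x, y₁)) (b := (x, y₂))
      (by simpa using hne)
    have hstep := norm_newton_step_sub_root_le hμ (hhess x) (fun z => hsc (x, z))
      (fun a b => hslice a b ▸ hQ (x, a) (x, b))
      ((hystar x).isLocalMin Filter.univ_mem |>.hasGradientAt_eq_zero (hgY x (ystar x))) y
    set A := y - Ring.inverse (hessYY (x, y)) (gradY (x, y))
    calc f (x, ystar x) ≤ f (x, A) + Mf * ‖A - ystar x‖ := by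
          have hfA := hf (x, A) (x, ystar x)
          rw [hslice] at hfA
          linarith [neg_abs_le (f (x, A) - f (x, ystar x))]
      _ ≤ f (x, A) + Mf * (Qg / (2 * μ ^ 3) * ‖gradY (x, y)‖ ^ 2) := by gcongr
      _ = f (x, A) + Mf * Qg / μ ^ 3 / 2 * ‖gradY (x, y)‖ ^ 2 := by ring
      _ ≤ f (x, A) + β / 2 * ‖gradY (x, y)‖ ^ 2 := by gcongr
  obtain ⟨c, hc⟩ := hΦ
  exact ⟨key, c, by rintro _ ⟨q, rfl⟩; exact (hc ⟨q.1, rfl⟩).trans (key q.1 q.2)⟩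
end

section
/- Under the blanket assumptions, for any (x,y) and any direction d ∈ ℝᵖ, lim sup_{t→0} |f(x, A(x, y+td)) − f(x, A(x,y))| / t ≤ (M_f Q_g / μ²) ‖∇_y g(x,y)‖ ‖d‖, where A(x,y) = y − (∇²_{yy} g(x,y))⁻¹ ∇_y g(x,y). -/
open Filter Topology

lemma key_inv {p : ℕ} {μ : ℝ} (hμ : 0 < μ)
    (T : EuclideanSpace ℝ (Fin p) →L[ℝ] EuclideanSpace ℝ (Fin p))
    (hsc : ∀ v, μ * ‖v‖ ^ 2 ≤ (inner ℝ v (T v) : ℝ)) :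
    (∀ u, T (Ring.inverse T u) = u) ∧ (∀ v, Ring.inverse T (T v) = v) ∧
      (∀ u, ‖Ring.inverse T u‖ ≤ ‖u‖ / μ) := by
  have hlow : ∀ v, μ * ‖v‖ ≤ ‖T v‖ := by
    intro v
    rcases eq_or_ne v 0 with rfl | hv
    · simp
    · have h1 : μ * ‖v‖ ^ 2 ≤ ‖v‖ * ‖T v‖ := (hsc v).trans (real_inner_le_norm v (T v))
      have hv' : 0 < ‖v‖ := norm_pos_iff.mpr hv
      nlinarith
  have hinj : Function.Injective T.toLinearMap := by
    intro a b hab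
    have h2 : T (a - b) = 0 := by
      simp only [map_sub]
      simpa [sub_eq_zero] using hab
    have h3 := hlow (a - b)
    rw [h2, norm_zero] at h3
    have h4 : ‖a - b‖ ≤ 0 := by nlinarith [norm_nonneg (a - b)]
    have : a - b = 0 := by
      rw [← norm_le_zero_iff]; exact h4
    simpa [sub_eq_zero] using this
  have hsurj : Function.Surjective T.toLinearMap :=
    LinearMap.injective_iff_surjective.mp hinj
  let e : EuclideanSpace ℝ (Fin p) ≃L[ℝ] EuclideanSpace ℝ (Fin p) :=
    (LinearEquiv.ofBijective T.toLinearMap ⟨hinj, hsurj⟩).toContinuousLinearEquiv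
  have hTe : (e : EuclideanSpace ℝ (Fin p) →L[ℝ] EuclideanSpace ℝ (Fin p)) = T := by
    ext v; rfl
  have hinv : Ring.inverse T =
      (e.symm : EuclideanSpace ℝ (Fin p) →L[ℝ] EuclideanSpace ℝ (Fin p)) := by
    rw [← hTe, ContinuousLinearMap.ringInverse_eq_inverse, ContinuousLinearMap.inverse_equiv]
  have happ : ∀ v, e v = T v := fun v => by rw [← hTe]; rfl
  refine ⟨fun u => ?_, fun v => ?_, fun u => ?_⟩
  · rw [hinv]
    have := e.apply_symm_apply u
    rw [happ] at this
    exact this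
  · rw [hinv]
    have := e.symm_apply_apply v
    rw [happ] at this
    exact this
  · have h5 := hlow (Ring.inverse T u)
    have h6 : T (Ring.inverse T u) = u := by
      rw [hinv]
      have := e.apply_symm_apply u
      rw [happ] at this
      exact this
    rw [h6] at h5
    rw [le_div_iff₀ hμ]
    linarith

lemma prod_norm_same_fst {n p : ℕ} (x : EuclideanSpace ℝ (Fin n))
    (a b : EuclideanSpace ℝ (Fin p)) :
    ‖((x, a) - (x, b) : EuclideanSpace ℝ (Fin n) × EuclideanSpace ℝ (Fin p))‖ = ‖a - b‖ := by
  rw [Prod.mk_sub_mk, sub_self, Prod.norm_def]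
  simp [max_eq_right (norm_nonneg _)]

lemma newton_diff_eq {p : ℕ} (T1 T0 : EuclideanSpace ℝ (Fin p) →L[ℝ] EuclideanSpace ℝ (Fin p))
    (u1 u0 : EuclideanSpace ℝ (Fin p)) (y s : EuclideanSpace ℝ (Fin p))
    (c1 : T1 (Ring.inverse T1 u1) = u1)
    (c1' : ∀ v, Ring.inverse T1 (T1 v) = v)
    (c0 : T0 (Ring.inverse T0 u0) = u0) :
    ((y + s) - Ring.inverse T1 u1) - (y - Ring.inverse T0 u0) =
      Ring.inverse T1 ((T0 s - (u1 - u0)) + (T1 - T0) s + (T1 - T0) (Ring.inverse T0 u0)) := by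
  have key : T1 (((y + s) - Ring.inverse T1 u1) - (y - Ring.inverse T0 u0)) =
      (T0 s - (u1 - u0)) + (T1 - T0) s + (T1 - T0) (Ring.inverse T0 u0) := by
    simp only [map_sub, map_add, ContinuousLinearMap.sub_apply, c1, c0]
    abel
  rw [← key, c1']

/-- Lemma 3.6: Under the blanket assumptions, for any `(x,y)` and any
direction `d ∈ ℝᵖ`,
`limsup_{t→0⁺} |f(x, A(x, y+td)) − f(x, A(x,y))| / t ≤ (Mf Qg / μ²) ‖∇_y g(x,y)‖ ‖d‖`,
where `A(x,y) = y − (∇²_{yy} g(x,y))⁻¹ ∇_y g(x,y)`. -/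
theorem limsup_f_comp_newton_map (n p : ℕ) (μ Qg Lg Mf : ℝ) (hμ : 0 < μ)
    (f g : EuclideanSpace ℝ (Fin n) × EuclideanSpace ℝ (Fin p) → ℝ)
    (gradY : EuclideanSpace ℝ (Fin n) × EuclideanSpace ℝ (Fin p) → EuclideanSpace ℝ (Fin p))
    (hessYY : EuclideanSpace ℝ (Fin n) × EuclideanSpace ℝ (Fin p) →
      EuclideanSpace ℝ (Fin p) →L[ℝ] EuclideanSpace ℝ (Fin p))
    -- `f` is `Mf`-Lipschitz continuous
    (hf : ∀ q q', |f q - f q'| ≤ Mf * ‖q - q'‖)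
    (hgY : ∀ x y, HasGradientAt (fun y' => g (x, y')) (gradY (x, y)) y)
    (hhess : ∀ x y, HasFDerivAt (fun y' => gradY (x, y')) (hessYY (x, y)) y)
    -- strong convexity in `y`: `∇²_{yy} g(x,y) ⪰ μ I`
    (hsc : ∀ q v, μ * ‖v‖ ^ 2 ≤ (inner ℝ v (hessYY q v) : ℝ))
    -- `∇_y g` is `Lg`-Lipschitz
    (hLg : ∀ q q', ‖gradY q - gradY q'‖ ≤ Lg * ‖q - q'‖)
    -- the Hessian map is `Qg`-Lipschitz in operator norm
    (hQ : ∀ q q', ‖hessYY q - hessYY q'‖ ≤ Qg * ‖q - q'‖) :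
    ∀ (x : EuclideanSpace ℝ (Fin n)) (y d : EuclideanSpace ℝ (Fin p)),
      Filter.limsup
        (fun t : ℝ =>
          |f (x, (y + t • d) - Ring.inverse (hessYY (x, y + t • d)) (gradY (x, y + t • d))) -
              f (x, y - Ring.inverse (hessYY (x, y)) (gradY (x, y)))| / t)
        (𝓝[>] (0 : ℝ)) ≤ Mf * Qg / μ ^ 2 * ‖gradY (x, y)‖ * ‖d‖ := by
  intro x y d
  rcases Nat.eq_zero_or_pos p with hp | hp
  · subst hp
    have hd : d = 0 := Subsingleton.elim _ _
    have hz : (fun t : ℝ =>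
        |f (x, (y + t • d) - Ring.inverse (hessYY (x, y + t • d)) (gradY (x, y + t • d))) -
            f (x, y - Ring.inverse (hessYY (x, y)) (gradY (x, y)))| / t) = fun _ => (0:ℝ) := by
      funext t
      have he : ((y + t • d) - Ring.inverse (hessYY (x, y + t • d)) (gradY (x, y + t • d)))
          = (y - Ring.inverse (hessYY (x, y)) (gradY (x, y))) := Subsingleton.elim _ _
      rw [he, sub_self, abs_zero, zero_div]
    rw [hz, Filter.limsup_const, hd, norm_zero, mul_zero]
  -- main case `0 < p`
  have hv : ‖(EuclideanSpace.single (⟨0, hp⟩ : Fin p) (1:ℝ))‖ = 1 := by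
    simp [EuclideanSpace.norm_single]
  set v := EuclideanSpace.single (⟨0, hp⟩ : Fin p) (1:ℝ) with hvdef
  have hnorm1 : ‖((x, v) - (x, 0) : EuclideanSpace ℝ (Fin n) × EuclideanSpace ℝ (Fin p))‖ = 1 := by
    rw [prod_norm_same_fst, sub_zero, hv]
  have hMf : 0 ≤ Mf := by
    have := hf (x, v) (x, 0)
    rw [hnorm1, mul_one] at this
    exact le_trans (abs_nonneg _) this
  have hQg : 0 ≤ Qg := by
    have := hQ (x, v) (x, 0)
    rw [hnorm1, mul_one] at this
    exact le_trans (norm_nonneg _) this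
  -- the limsup bound
  set C : ℝ := Mf * Qg / μ ^ 2 * ‖gradY (x, y)‖ * ‖d‖ with hC
  set B : ℝ → ℝ := fun t =>
    Mf / μ * (‖gradY (x, y + t • d) - gradY (x, y) - t • (hessYY (x, y) d)‖ / t) +
      Mf * Qg * ‖d‖ ^ 2 / μ * t + C with hBdef
  -- derivative of t ↦ gradY (x, y + t • d)
  have h0 : y + (0:ℝ) • d = y := by simp
  have h1 : HasDerivAt (fun t : ℝ => y + t • d) d 0 := by
    simpa using ((hasDerivAt_id (0:ℝ)).smul_const d).const_add y
  have hG : HasDerivAt (fun t : ℝ => gradY (x, y + t • d)) (hessYY (x, y) d) 0 := by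
    have h2 : HasFDerivAt (fun y' => gradY (x, y')) (hessYY (x, y)) (y + (0:ℝ) • d) := by
      rw [h0]; exact hhess x y
    exact h2.comp_hasDerivAt 0 h1
  have hr : Tendsto (fun t : ℝ =>
      ‖gradY (x, y + t • d) - gradY (x, y) - t • (hessYY (x, y) d)‖ / t)
      (𝓝[>] (0:ℝ)) (𝓝 0) := by
    have h3 := hasDerivAt_iff_isLittleO.mp hG
    simp only [sub_zero, h0] at h3
    exact h3.norm_left.tendsto_div_nhds_zero.mono_left nhdsWithin_le_nhds
  have ht0 : Tendsto (fun t : ℝ => t) (𝓝[>] (0:ℝ)) (𝓝 0) :=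
    tendsto_id.mono_left nhdsWithin_le_nhds
  have hB : Tendsto B (𝓝[>] (0:ℝ)) (𝓝 C) := by
    have := ((hr.const_mul (Mf / μ)).add (ht0.const_mul (Mf * Qg * ‖d‖ ^ 2 / μ))).add
      (tendsto_const_nhds (x := C) (f := 𝓝[>] (0:ℝ)))
    simpa [hBdef, mul_comm] using this
  -- the pointwise bound
  have key : ∀ t ∈ Set.Ioi (0:ℝ),
      |f (x, (y + t • d) - Ring.inverse (hessYY (x, y + t • d)) (gradY (x, y + t • d))) -
          f (x, y - Ring.inverse (hessYY (x, y)) (gradY (x, y)))| / t ≤ B t := by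
    intro t ht
    rw [Set.mem_Ioi] at ht
    obtain ⟨c1, c1', cn1⟩ := key_inv hμ (hessYY (x, y + t • d)) (fun w => hsc _ w)
    obtain ⟨c0, c0', cn0⟩ := key_inv hμ (hessYY (x, y)) (fun w => hsc _ w)
    have hdiff := newton_diff_eq (hessYY (x, y + t • d)) (hessYY (x, y))
      (gradY (x, y + t • d)) (gradY (x, y)) y (t • d) (c1 _) c1' (c0 _)
    have hsn : ‖t • d‖ = t * ‖d‖ := by
      rw [norm_smul, Real.norm_eq_abs, abs_of_pos ht]
    have hH : ‖hessYY (x, y + t • d) - hessYY (x, y)‖ ≤ Qg * (t * ‖d‖) := by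
      have := hQ (x, y + t • d) (x, y)
      rw [prod_norm_same_fst, add_sub_cancel_left, hsn] at this
      exact this
    have hQt : 0 ≤ Qg * (t * ‖d‖) :=
      mul_nonneg hQg (mul_nonneg ht.le (norm_nonneg _))
    -- bound the three summands
    have hb1 : ‖hessYY (x, y) (t • d) - (gradY (x, y + t • d) - gradY (x, y))‖ =
        ‖gradY (x, y + t • d) - gradY (x, y) - t • (hessYY (x, y) d)‖ := by
      rw [← norm_neg]
      congr 1
      rw [map_smul]
      abel
    have hb2 : ‖(hessYY (x, y + t • d) - hessYY (x, y)) (t • d)‖ ≤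
        Qg * (t * ‖d‖) * (t * ‖d‖) := by
      calc ‖(hessYY (x, y + t • d) - hessYY (x, y)) (t • d)‖
          ≤ ‖hessYY (x, y + t • d) - hessYY (x, y)‖ * ‖t • d‖ :=
            ContinuousLinearMap.le_opNorm _ _
        _ ≤ Qg * (t * ‖d‖) * (t * ‖d‖) := by
            rw [hsn]
            exact mul_le_mul_of_nonneg_right hH (by positivity)
    have hb3 : ‖(hessYY (x, y + t • d) - hessYY (x, y))
        (Ring.inverse (hessYY (x, y)) (gradY (x, y)))‖ ≤
        Qg * (t * ‖d‖) * (‖gradY (x, y)‖ / μ) := by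
      calc ‖(hessYY (x, y + t • d) - hessYY (x, y))
            (Ring.inverse (hessYY (x, y)) (gradY (x, y)))‖
          ≤ ‖hessYY (x, y + t • d) - hessYY (x, y)‖ *
            ‖Ring.inverse (hessYY (x, y)) (gradY (x, y))‖ :=
            ContinuousLinearMap.le_opNorm _ _
        _ ≤ Qg * (t * ‖d‖) * (‖gradY (x, y)‖ / μ) := by
            apply mul_le_mul hH (cn0 _) (norm_nonneg _) hQt
    set a : ℝ := ‖gradY (x, y + t • d) - gradY (x, y) - t • (hessYY (x, y) d)‖ with ha
    have hwnorm : ‖(hessYY (x, y) (t • d) - (gradY (x, y + t • d) - gradY (x, y))) +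
        (hessYY (x, y + t • d) - hessYY (x, y)) (t • d) +
        (hessYY (x, y + t • d) - hessYY (x, y))
          (Ring.inverse (hessYY (x, y)) (gradY (x, y)))‖ ≤
        a + Qg * (t * ‖d‖) * (t * ‖d‖) + Qg * (t * ‖d‖) * (‖gradY (x, y)‖ / μ) := by
      calc _ ≤ ‖hessYY (x, y) (t • d) - (gradY (x, y + t • d) - gradY (x, y))‖ +
            ‖(hessYY (x, y + t • d) - hessYY (x, y)) (t • d)‖ +
            ‖(hessYY (x, y + t • d) - hessYY (x, y))
              (Ring.inverse (hessYY (x, y)) (gradY (x, y)))‖ := norm_add₃_le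
        _ ≤ a + Qg * (t * ‖d‖) * (t * ‖d‖) + Qg * (t * ‖d‖) * (‖gradY (x, y)‖ / μ) := by
            rw [hb1]
            exact add_le_add (add_le_add le_rfl hb2) hb3
    have hdiffnorm : ‖((y + t • d) -
        Ring.inverse (hessYY (x, y + t • d)) (gradY (x, y + t • d))) -
        (y - Ring.inverse (hessYY (x, y)) (gradY (x, y)))‖ ≤
        (a + Qg * (t * ‖d‖) * (t * ‖d‖) + Qg * (t * ‖d‖) * (‖gradY (x, y)‖ / μ)) / μ := by
      rw [hdiff]
      exact le_trans (cn1 _) ((div_le_div_iff_of_pos_right hμ).mpr hwnorm)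
    -- combine
    have hfstep : |f (x, (y + t • d) -
        Ring.inverse (hessYY (x, y + t • d)) (gradY (x, y + t • d))) -
        f (x, y - Ring.inverse (hessYY (x, y)) (gradY (x, y)))| ≤
        Mf * ((a + Qg * (t * ‖d‖) * (t * ‖d‖) + Qg * (t * ‖d‖) * (‖gradY (x, y)‖ / μ)) / μ) := by
      have h5 := hf (x, (y + t • d) -
        Ring.inverse (hessYY (x, y + t • d)) (gradY (x, y + t • d)))
        (x, y - Ring.inverse (hessYY (x, y)) (gradY (x, y)))
      rw [prod_norm_same_fst] at h5
      exact le_trans h5 (mul_le_mul_of_nonneg_left hdiffnorm hMf)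
    calc |f (x, (y + t • d) -
          Ring.inverse (hessYY (x, y + t • d)) (gradY (x, y + t • d))) -
          f (x, y - Ring.inverse (hessYY (x, y)) (gradY (x, y)))| / t
        ≤ Mf * ((a + Qg * (t * ‖d‖) * (t * ‖d‖) + Qg * (t * ‖d‖) * (‖gradY (x, y)‖ / μ)) / μ)
            / t := by
          exact (div_le_div_iff_of_pos_right ht).mpr hfstep
      _ = B t := by
          rw [hBdef, hC]
          field_simp
          ring
  -- conclude via limsup comparison
  have hFB : ∀ᶠ t in 𝓝[>] (0:ℝ),
      |f (x, (y + t • d) - Ring.inverse (hessYY (x, y + t • d)) (gradY (x, y + t • d))) -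
          f (x, y - Ring.inverse (hessYY (x, y)) (gradY (x, y)))| / t ≤ B t :=
    eventually_nhdsWithin_of_forall key
  have hF0 : ∀ᶠ t in 𝓝[>] (0:ℝ), (0:ℝ) ≤
      |f (x, (y + t • d) - Ring.inverse (hessYY (x, y + t • d)) (gradY (x, y + t • d))) -
          f (x, y - Ring.inverse (hessYY (x, y)) (gradY (x, y)))| / t :=
    eventually_nhdsWithin_of_forall fun t ht =>
      div_nonneg (abs_nonneg _) (le_of_lt ht)
  have hcb : IsCoboundedUnder (· ≤ ·) (𝓝[>] (0:ℝ))
      (fun t : ℝ =>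
        |f (x, (y + t • d) - Ring.inverse (hessYY (x, y + t • d)) (gradY (x, y + t • d))) -
            f (x, y - Ring.inverse (hessYY (x, y)) (gradY (x, y)))| / t) := by
    apply Filter.IsBoundedUnder.isCoboundedUnder_le
    exact ⟨0, by simpa [eventually_map] using hF0⟩
  calc Filter.limsup _ (𝓝[>] (0:ℝ)) ≤ Filter.limsup B (𝓝[>] (0:ℝ)) :=
        Filter.limsup_le_limsup hFB hcb hB.isBoundedUnder_le
    _ = C := hB.limsup_eq
end

section
/- Let D : ℝᵐ ⇉ ℝˢ be a set-valued mapping with closed graph and compact convex values. If w_k → w̃ and u_k ∈ D(w_k) for every k, then the Cesàro averages satisfy dist((1/N)∑_{k=1}^N u_k, D(w̃)) → 0 as N → ∞. -/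
open Filter Topology

/-- Proposition 4.4: Let `D : ℝᵐ ⇉ ℝˢ` be a set-valued mapping with closed
graph and nonempty compact convex values. If `w_k → w̃`, `u_k ∈ D(w_k)` for every `k`, and
the sequence `(u_k)` is bounded, then the Cesàro averages satisfy
`dist((1/N) ∑_{k<N} u_k, D(w̃)) → 0` as `N → ∞`. -/
theorem cesaro_averages_dist_to_closed_graph_map (m s : ℕ)
    (D : EuclideanSpace ℝ (Fin m) → Set (EuclideanSpace ℝ (Fin s)))
    (hgraph : IsClosed {q : EuclideanSpace ℝ (Fin m) × EuclideanSpace ℝ (Fin s) | q.2 ∈ D q.1})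
    (hne : ∀ w, (D w).Nonempty) (hcpt : ∀ w, IsCompact (D w)) (hconv : ∀ w, Convex ℝ (D w))
    (w : ℕ → EuclideanSpace ℝ (Fin m)) (wtilde : EuclideanSpace ℝ (Fin m))
    (hw : Filter.Tendsto w Filter.atTop (nhds wtilde))
    (u : ℕ → EuclideanSpace ℝ (Fin s)) (hu : ∀ k, u k ∈ D (w k))
    (hbdd : ∃ R, ∀ k, ‖u k‖ ≤ R) :
    Filter.Tendsto
      (fun N : ℕ => Metric.infDist ((N : ℝ)⁻¹ • ∑ k ∈ Finset.range N, u k) (D wtilde))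
      Filter.atTop (nhds 0) := by
  obtain ⟨R, hR⟩ := hbdd
  set d : ℕ → ℝ := fun k => Metric.infDist (u k) (D wtilde) with hd
  -- Step 1: d → 0
  have hd0 : ∀ k, 0 ≤ d k := fun k => Metric.infDist_nonneg
  have hdtend : Tendsto d atTop (𝓝 0) := by
    rw [Metric.tendsto_atTop]
    by_contra hcon
    push_neg at hcon
    obtain ⟨ε, hε, hfreq⟩ := hcon
    have hfreq' : ∃ᶠ n in atTop, ε ≤ d n := by
      rw [Filter.frequently_atTop]
      intro N
      obtain ⟨n, hn, hdn⟩ := hfreq N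
      refine ⟨n, hn, ?_⟩
      have : dist (d n) 0 = d n := by
        rw [Real.dist_eq, sub_zero, abs_of_nonneg (hd0 n)]
      linarith [hdn, this.ge]
    obtain ⟨φ, hφmono, hφ⟩ := Filter.extraction_of_frequently_atTop hfreq'
    have hball : ∀ n, u (φ n) ∈ Metric.closedBall (0 : EuclideanSpace ℝ (Fin s)) R := by
      intro n
      simpa [Metric.mem_closedBall, dist_zero_right] using hR (φ n)
    obtain ⟨L, _, ψ, hψmono, hLtend⟩ :=
      (isCompact_closedBall (0 : EuclideanSpace ℝ (Fin s)) R).tendsto_subseq hball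
    have hwtend : Tendsto (fun n => w (φ (ψ n))) atTop (𝓝 wtilde) :=
      hw.comp ((hφmono.comp hψmono).tendsto_atTop)
    have hpair : Tendsto (fun n => (w (φ (ψ n)), u (φ (ψ n)))) atTop (𝓝 (wtilde, L)) :=
      hwtend.prodMk_nhds hLtend
    have hLmem : L ∈ D wtilde := by
      have := hgraph.mem_of_tendsto hpair
        (Filter.Eventually.of_forall fun n => hu (φ (ψ n)))
      exact this
    have hdist0 : Tendsto (fun n => d (φ (ψ n))) atTop (𝓝 0) := by
      have : Tendsto (fun n => Metric.infDist (u (φ (ψ n))) (D wtilde)) atTop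
          (𝓝 (Metric.infDist L (D wtilde))) :=
        ((Metric.continuous_infDist_pt (D wtilde)).continuousAt.tendsto).comp hLtend
      rwa [Metric.infDist_zero_of_mem hLmem] at this
    have : ε ≤ 0 := ge_of_tendsto hdist0
      (Filter.Eventually.of_forall fun n => hφ (ψ n))
    linarith
  -- Step 2: Cesàro averages of d tend to 0
  have hcesaro : Tendsto (fun N : ℕ => (N : ℝ)⁻¹ * ∑ k ∈ Finset.range N, d k) atTop (𝓝 0) := by
    have h1 := Asymptotics.isLittleO_sum_range_of_tendsto_zero hdtend
    have h2 := h1.tendsto_div_nhds_zero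
    refine h2.congr fun N => ?_
    rw [div_eq_inv_mul]
  -- Choose nearest points v k ∈ D wtilde
  have hnear : ∀ k, ∃ v ∈ D wtilde, d k = dist (u k) v := fun k =>
    (hcpt wtilde).exists_infDist_eq_dist (hne wtilde) (u k)
  choose v hv hdv using hnear
  -- Key bound for N ≥ 1
  have hbound : ∀ N : ℕ, 1 ≤ N →
      Metric.infDist ((N : ℝ)⁻¹ • ∑ k ∈ Finset.range N, u k) (D wtilde) ≤
        (N : ℝ)⁻¹ * ∑ k ∈ Finset.range N, d k := by
    intro N hN
    have hNpos : (0 : ℝ) < N := by exact_mod_cast hN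
    have hvmem : (N : ℝ)⁻¹ • ∑ k ∈ Finset.range N, v k ∈ D wtilde := by
      have := (hconv wtilde).sum_mem (t := Finset.range N) (w := fun _ => (N : ℝ)⁻¹)
        (fun _ _ => by positivity)
        (by simp [Finset.sum_const, Finset.card_range]; field_simp)
        (fun k _ => hv k)
      simpa [Finset.smul_sum] using this
    calc Metric.infDist ((N : ℝ)⁻¹ • ∑ k ∈ Finset.range N, u k) (D wtilde)
        ≤ dist ((N : ℝ)⁻¹ • ∑ k ∈ Finset.range N, u k)
            ((N : ℝ)⁻¹ • ∑ k ∈ Finset.range N, v k) := Metric.infDist_le_dist_of_mem hvmem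
      _ = (N : ℝ)⁻¹ * ‖∑ k ∈ Finset.range N, u k - ∑ k ∈ Finset.range N, v k‖ := by
          rw [dist_eq_norm, ← smul_sub, norm_smul, Real.norm_eq_abs,
            abs_of_pos (by positivity : (0:ℝ) < (N:ℝ)⁻¹)]
      _ ≤ (N : ℝ)⁻¹ * ∑ k ∈ Finset.range N, d k := by
          gcongr
          rw [← Finset.sum_sub_distrib]
          refine (norm_sum_le _ _).trans (le_of_eq ?_)
          refine Finset.sum_congr rfl fun k _ => ?_
          rw [hdv k, dist_eq_norm]
  -- Squeeze
  have hnonneg : ∀ N : ℕ,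
      0 ≤ Metric.infDist ((N : ℝ)⁻¹ • ∑ k ∈ Finset.range N, u k) (D wtilde) :=
    fun N => Metric.infDist_nonneg
  refine tendsto_of_tendsto_of_tendsto_of_le_of_le' tendsto_const_nhds hcesaro
    (Filter.Eventually.of_forall hnonneg) ?_
  filter_upwards [Filter.eventually_ge_atTop 1] with N hN
  exact hbound N hN
end

section
/- Suppose for all (x,y) ∈ ℝⁿ×ℝᵖ and all (d_x,d_y) with ‖(d_x,d_y)‖ ≤ M_f, the vector ξ = J(x,y)d_y + β H(x,y)v, where ‖J(x,y)d_y‖ ≤ (Q_g M_f/μ²)‖v‖, H(x,y) ⪰ μI, v = ∇_y g(x,y), and β ≥ 2Q_g M_f/μ³. If ξ = 0, then v = 0. -/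
/-- feasibility of stationary points of CDB: Let `H = ∇²_{yy} g(x,y)` satisfy
`H ⪰ μI` (`μ > 0`), `v = ∇_y g(x,y)`, and let `a = J(x,y) d_y` satisfy
`‖a‖ ≤ (Qg Mf / μ²) ‖v‖`. If `β ≥ 2 Qg Mf / μ³` and `ξ = a + β H v = 0`, then `v = 0`. -/
theorem cdb_stationary_implies_feasible (pdim : ℕ) (μ Qg Mf β : ℝ)
    (hμ : 0 < μ) (hQ : 0 < Qg) (hM : 0 < Mf)
    (H : EuclideanSpace ℝ (Fin pdim) →L[ℝ] EuclideanSpace ℝ (Fin pdim))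
    (a v : EuclideanSpace ℝ (Fin pdim))
    (hH : ∀ w, μ * ‖w‖ ^ 2 ≤ (inner ℝ w (H w) : ℝ))
    (ha : ‖a‖ ≤ Qg * Mf / μ ^ 2 * ‖v‖)
    (hβ : 2 * Qg * Mf / μ ^ 3 ≤ β)
    (hξ : a + β • H v = 0) :
    v = 0 := by
  by_contra hv
  have hvnorm : 0 < ‖v‖ := norm_pos_iff.mpr hv
  have h0 : (inner ℝ v (a + β • H v) : ℝ) = 0 := by rw [hξ]; simp
  have h1 : (inner ℝ v (a + β • H v) : ℝ) = inner ℝ v a + β * inner ℝ v (H v) := by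
    rw [inner_add_right, inner_smul_right]
  have h2 : β * μ * ‖v‖ ^ 2 ≤ β * (inner ℝ v (H v) : ℝ) := by
    have hβpos : 0 < β := lt_of_lt_of_le (by positivity) hβ
    have := hH v
    nlinarith
  have h3 : (inner ℝ v a : ℝ) ≥ -(Qg * Mf / μ ^ 2 * ‖v‖ ^ 2) := by
    have := abs_real_inner_le_norm v a
    have h4 : (inner ℝ v a : ℝ) ≥ -(‖v‖ * ‖a‖) := neg_le_of_abs_le this
    nlinarith
  have hβμ : Qg * Mf / μ ^ 2 * 2 ≤ β * μ := by
    have : 0 < μ ^ 3 := by positivity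
    rw [div_le_iff₀ this] at hβ
    have hμ2 : (0:ℝ) < μ ^ 2 := by positivity
    rw [div_mul_eq_mul_div, div_le_iff₀ hμ2]
    nlinarith
  nlinarith [h0, h1, h2, h3, mul_le_mul_of_nonneg_right hβμ (sq_nonneg ‖v‖), mul_pos (by positivity : (0:ℝ) < Qg * Mf / μ ^ 2) (by positivity : (0:ℝ) < ‖v‖ ^ 2)]
end
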